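/- For all integers K ≥ 1, T ≥ 1 and m ≥ 1, the optimal bookmaking loss is subadditive under horizon repetition: V (m·T) 0 ≤ m · (V T 0). -/

import Mathlib

open scoped BigOperators

noncomputable section

def simplex (K : ℕ) : Set (Fin K → ℝ) :=
  {q | (∀ k, 0 ≤ q k) ∧ ∑ k, q k = 1}

def simplexInt (K : ℕ) : Set (Fin K → ℝ) :=
  {r | (∀ k, 0 < r k) ∧ ∑ k, r k = 1}

noncomputable def V (K : ℕ) : ℕ → (Fin K → ℝ) → ℝ
  | 0, s => ⨆ k, s k
  | H + 1, s =>
      sInf ((fun r : Fin K → ℝ =>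
        sSup ((fun q : Fin K → ℝ => V K H (fun k => s k + q k / r k)) '' simplex K))
        '' simplexInt K)

/-!
Every `V K H` is topical: monotone and commuting with the addition of constants. Comparing the
Bellman recursions of `V K (A + B)` and `V K B` step by step, topicality lets the last `A` rounds
be charged at most `V K A 0` whatever state they start from, so `V K (A + B) s ≤ V K B s + V K A 0`.
Iterating with `A = T` gives the theorem.
-/

/-- Equivalent to being monotone with `W (s + c) = W s + c` for every constant `c`. -/
def IsTopical {ι : Type*} (W : (ι → ℝ) → ℝ) : Prop :=
  ∀ s t : ι → ℝ, ∀ c : ℝ, (∀ k, s k ≤ t k + c) → W s ≤ W t + c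

namespace IsTopical

variable {ι : Type*} {W : (ι → ℝ) → ℝ}

theorem le_add_nonneg (hW : IsTopical W) (s : ι → ℝ) {u : ι → ℝ} (hu : 0 ≤ u) :
    W s ≤ W (s + u) := by
  simpa using hW s (s + u) 0 fun k => by simpa using hu k

theorem add_le_add_of_le (hW : IsTopical W) (s : ι → ℝ) {u : ι → ℝ} {c : ℝ}
    (hu : ∀ k, u k ≤ c) : W (s + u) ≤ W s + c :=
  hW (s + u) s c fun k => by simpa [add_comm] using add_le_add_right (hu k) (s k)

end IsTopical

theorem isTopical_iSup {ι : Type*} [Finite ι] [Nonempty ι] :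
    IsTopical fun s : ι → ℝ => ⨆ k, s k :=
  fun _ t c hst => ciSup_le fun k =>
    (hst k).trans (add_le_add_left (le_ciSup (Set.finite_range t).bddAbove k) c)

variable {K : ℕ}

theorem uniform_mem_simplexInt [NeZero K] : (fun _ : Fin K => (K : ℝ)⁻¹) ∈ simplexInt K := by
  have hK : (K : ℝ) ≠ 0 := Nat.cast_ne_zero.mpr (NeZero.ne K)
  refine ⟨fun _ => by positivity, ?_⟩
  simp [hK]

theorem simplexInt_subset_simplex : simplexInt K ⊆ simplex K :=
  fun _ hr => ⟨fun k => (hr.1 k).le, hr.2⟩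

theorem div_le_sum_inv_of_mem {q r : Fin K → ℝ} (hq : q ∈ simplex K) (hr : r ∈ simplexInt K)
    (k : Fin K) : q k / r k ≤ ∑ j, (r j)⁻¹ := by
  have hq1 : q k ≤ 1 := hq.2 ▸ Finset.single_le_sum (fun j _ => hq.1 j) (Finset.mem_univ k)
  calc q k / r k ≤ 1 / r k := div_le_div_of_nonneg_right hq1 (hr.1 k).le
    _ = (r k)⁻¹ := one_div _
    _ ≤ ∑ j, (r j)⁻¹ :=
      Finset.single_le_sum (fun j _ => (inv_pos.mpr (hr.1 j)).le) (Finset.mem_univ k)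

def worstCase (W : (Fin K → ℝ) → ℝ) (s r : Fin K → ℝ) : ℝ :=
  sSup ((fun q : Fin K → ℝ => W fun k => s k + q k / r k) '' simplex K)

def bellman (W : (Fin K → ℝ) → ℝ) (s : Fin K → ℝ) : ℝ :=
  sInf (worstCase W s '' simplexInt K)

theorem V_succ (H : ℕ) : V K (H + 1) = bellman (V K H) := rfl

section Bellman

variable {W : (Fin K → ℝ) → ℝ}

theorem IsTopical.bddAbove_worstCase (hW : IsTopical W) (s : Fin K → ℝ) {r : Fin K → ℝ}
    (hr : r ∈ simplexInt K) :
    BddAbove ((fun q : Fin K → ℝ => W fun k => s k + q k / r k) '' simplex K) := by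
  refine ⟨W s + ∑ j, (r j)⁻¹, ?_⟩
  rintro _ ⟨q, hq, rfl⟩
  exact hW.add_le_add_of_le s (u := q / r) (div_le_sum_inv_of_mem hq hr)

theorem IsTopical.le_worstCase [NeZero K] (hW : IsTopical W) (s : Fin K → ℝ) {r : Fin K → ℝ}
    (hr : r ∈ simplexInt K) : W s ≤ worstCase W s r := by
  have hq := simplexInt_subset_simplex (uniform_mem_simplexInt (K := K))
  calc W s ≤ W (s + (fun _ => (K : ℝ)⁻¹) / r) :=
        hW.le_add_nonneg s fun k => div_nonneg (hq.1 k) (hr.1 k).le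
    _ ≤ worstCase W s r := le_csSup (hW.bddAbove_worstCase s hr) ⟨_, hq, rfl⟩

theorem IsTopical.bellman_le_bellman_add [NeZero K] {W' : (Fin K → ℝ) → ℝ} (hW : IsTopical W)
    (hW' : IsTopical W') {s t : Fin K → ℝ} {c : ℝ}
    (h : ∀ u : Fin K → ℝ, 0 ≤ u → W (s + u) ≤ W' (t + u) + c) :
    bellman W s ≤ bellman W' t + c := by
  rw [← sub_le_iff_le_add]
  refine le_csInf (Set.Nonempty.image _ ⟨_, uniform_mem_simplexInt⟩) ?_
  rintro _ ⟨r, hr, rfl⟩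
  rw [sub_le_iff_le_add]
  have hbdd : BddBelow (worstCase W s '' simplexInt K) := by
    refine ⟨W s, ?_⟩
    rintro _ ⟨r, hr, rfl⟩
    exact hW.le_worstCase s hr
  refine (csInf_le hbdd ⟨r, hr, rfl⟩).trans (csSup_le ?_ ?_)
  · exact Set.Nonempty.image _ ⟨_, simplexInt_subset_simplex uniform_mem_simplexInt⟩
  rintro _ ⟨q, hq, rfl⟩
  calc W (s + q / r) ≤ W' (t + q / r) + c := h _ fun k => div_nonneg (hq.1 k) (hr.1 k).le
    _ ≤ worstCase W' t r + c :=
      add_le_add_left (le_csSup (hW'.bddAbove_worstCase t hr) ⟨q, hq, rfl⟩) c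

theorem IsTopical.bellman [NeZero K] (hW : IsTopical W) : IsTopical (bellman W) :=
  fun s t c hst => hW.bellman_le_bellman_add hW fun u _ =>
    hW _ _ c fun k => by simpa [add_right_comm] using add_le_add_right (hst k) (u k)

end Bellman

variable [NeZero K]

theorem isTopical_V (H : ℕ) : IsTopical (V K H) := by
  induction H with
  | zero => exact isTopical_iSup
  | succ H ih => exact V_succ H ▸ ih.bellman

theorem V_add_le (A B : ℕ) (s : Fin K → ℝ) : V K (A + B) s ≤ V K B s + V K A 0 := by
  induction B generalizing s with
  | zero =>
    rw [add_comm (V K 0 s)]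
    exact isTopical_V A s 0 _ fun k => by simpa [V] using le_ciSup (Set.finite_range s).bddAbove k
  | succ B ih =>
    rw [← add_assoc, V_succ, V_succ]
    exact (isTopical_V _).bellman_le_bellman_add (isTopical_V _) fun u _ => ih (s + u)

theorem optimal_loss_subadditive_general (K T m : ℕ) (hK : 1 ≤ K) :
    V K (m * T) 0 ≤ (m : ℝ) * V K T 0 := by
  have : NeZero K := ⟨by omega⟩
  induction m with
  | zero => simp [V]
  | succ m ih =>
    calc V K ((m + 1) * T) 0 = V K (T + m * T) 0 := by rw [Nat.succ_mul, Nat.add_comm]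
      _ ≤ V K (m * T) 0 + V K T 0 := V_add_le T (m * T) 0
      _ ≤ m * V K T 0 + V K T 0 := by gcongr
      _ = ((m + 1 : ℕ) : ℝ) * V K T 0 := by push_cast; ring

/-- Subadditivity of the optimal bookmaking loss under horizon repetition:
`L*_{mT,K} ≤ m · L*_{T,K}`. -/
theorem optimal_loss_subadditive (K T m : ℕ) (hK : 1 ≤ K) (hT : 1 ≤ T) (hm : 1 ≤ m) :
    V K (m * T) 0 ≤ (m : ℝ) * V K T 0 :=
  optimal_loss_subadditive_general K T m hK
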